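/- Let U ⊆ ℝ² be open, g : U → (symmetric positive definite 2×2 real matrices) and K : U → (symmetric 2×2 real matrices) smooth, with K nowhere a scalar multiple of g. Suppose the covariant divergence of the traceless part vanishes: Σ_c (∂_c K̂^c_b + Σ_d Γ^c_{cd} K̂^d_b − Σ_d Γ^d_{cb} K̂^c_d) = 0 on U for b = 1,2, where K̂^a_b = (g⁻¹K̂)^a_b. Then ω_a = −∂_a(ln α) for a = 1,2, and in particular ω is closed: ∂₁ω₂ = ∂₂ω₁ on U. (This is the statement that constant-mean-curvature data in space forms give isothermic surfaces.) -/

import Mathlib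

open Matrix
open scoped BigOperators

/-- Partial derivative of a map in the `a`-th coordinate direction of `ℝ²`. -/
noncomputable def pd {E : Type*} [NormedAddCommGroup E] [NormedSpace ℝ E]
    (a : Fin 2) (f : (Fin 2 → ℝ) → E) (p : Fin 2 → ℝ) : E :=
  fderiv ℝ f p (Pi.single a 1)

lemma pd_congr {f h : (Fin 2 → ℝ) → ℝ} {p : Fin 2 → ℝ} (hf : f =ᶠ[nhds p] h) (a : Fin 2) :
    pd a f p = pd a h p := by
  unfold pd; rw [hf.fderiv_eq]

lemma pd_mul {f h : (Fin 2 → ℝ) → ℝ} {p : Fin 2 → ℝ} (hf : DifferentiableAt ℝ f p)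
    (hh : DifferentiableAt ℝ h p) (a : Fin 2) :
    pd a (fun q => f q * h q) p = pd a f p * h p + f p * pd a h p := by
  unfold pd
  rw [fderiv_fun_mul hf hh]
  simp only [ContinuousLinearMap.add_apply, ContinuousLinearMap.smul_apply, smul_eq_mul]
  ring

lemma pd_neg {f : (Fin 2 → ℝ) → ℝ} {p : Fin 2 → ℝ} (a : Fin 2) :
    pd a (fun q => -(f q)) p = -(pd a f p) := by
  unfold pd; rw [fderiv_fun_neg]; simp

lemma pd_log {f : (Fin 2 → ℝ) → ℝ} {p : Fin 2 → ℝ} (hf : DifferentiableAt ℝ f p)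
    (hfp : f p ≠ 0) (a : Fin 2) :
    pd a (fun q => Real.log (f q)) p = (f p)⁻¹ * pd a f p := by
  unfold pd
  rw [(hf.hasFDerivAt.log hfp).fderiv]
  simp

lemma pd_comm {f : (Fin 2 → ℝ) → ℝ} {p : Fin 2 → ℝ} (hf : ContDiffAt ℝ (⊤ : ℕ∞) f p) :
    pd 0 (fun q => pd 1 f q) p = pd 1 (fun q => pd 0 f q) p := by
  have hd : DifferentiableAt ℝ (fderiv ℝ f) p :=
    (hf.fderiv_right (m := 1) (by exact WithTop.coe_le_coe.mpr le_top)).differentiableAt one_ne_zero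
  have key : ∀ v w : Fin 2 → ℝ,
      fderiv ℝ (fun q => fderiv ℝ f q v) p w = fderiv ℝ (fderiv ℝ f) p w v := by
    intro v w
    have h1 : HasFDerivAt (fun q => fderiv ℝ f q v)
        ((ContinuousLinearMap.apply ℝ ℝ v).comp (fderiv ℝ (fderiv ℝ f) p)) p :=
      (ContinuousLinearMap.apply ℝ ℝ v).hasFDerivAt.comp p hd.hasFDerivAt
    rw [h1.fderiv]; rfl
  have hsymm := hf.isSymmSndFDerivAt (by rw [minSmoothness_of_isRCLikeNormedField]; exact WithTop.coe_le_coe.mpr le_top)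
  unfold pd
  rw [key, key]
  exact hsymm _ _

lemma diag_pos {A : Matrix (Fin 2) (Fin 2) ℝ} (hA : A.PosDef) (i : Fin 2) : 0 < A i i := by
  exact hA.diag_pos

/-- If the covariant divergence of the traceless part `K̂` vanishes, then
`ω_a = −∂_a ln α`, hence `ω` is closed (constant mean curvature data in space
forms give isothermic surfaces). -/
theorem divergence_free_implies_closed (U : Set (Fin 2 → ℝ)) (hU : IsOpen U)
    (g K : (Fin 2 → ℝ) → Matrix (Fin 2) (Fin 2) ℝ)
    (hgs : ∀ a b : Fin 2, ContDiffOn ℝ (⊤ : ℕ∞) (fun p => g p a b) U)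
    (hKs : ∀ a b : Fin 2, ContDiffOn ℝ (⊤ : ℕ∞) (fun p => K p a b) U)
    (hgpd : ∀ p ∈ U, (g p).PosDef)
    (hKsym : ∀ p ∈ U, (K p).IsSymm)
    (hind : ∀ p ∈ U, ∀ c : ℝ, K p ≠ c • g p)
    -- the `g`-traceless part `K̂ = K − ½ tr(g⁻¹K) g`
    (Khat : (Fin 2 → ℝ) → Matrix (Fin 2) (Fin 2) ℝ)
    (hKhat : ∀ p, Khat p = K p - ((1/2) * Matrix.trace ((g p)⁻¹ * K p)) • g p)
    -- the normalization `α = √(½ tr((g⁻¹K̂)²))`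
    (α : (Fin 2 → ℝ) → ℝ)
    (hα : ∀ p, α p =
      Real.sqrt ((1/2) * Matrix.trace (((g p)⁻¹ * Khat p) * ((g p)⁻¹ * Khat p))))
    -- the normalized tensor `k = α⁻¹ K̂`
    (k : (Fin 2 → ℝ) → Matrix (Fin 2) (Fin 2) ℝ)
    (hk : ∀ p, k p = (α p)⁻¹ • Khat p)
    -- the Christoffel symbols of `g`
    (Γ : (Fin 2 → ℝ) → Fin 2 → Fin 2 → Fin 2 → ℝ)
    (hΓ : ∀ p c a b, Γ p c a b = (1/2) * ∑ d, (g p)⁻¹ c d *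
      (pd a (fun q => g q d b) p + pd b (fun q => g q d a) p - pd d (fun q => g q a b) p))
    -- the mixed tensors `k^a_b` and `K̂^a_b`
    (kmix : (Fin 2 → ℝ) → Matrix (Fin 2) (Fin 2) ℝ)
    (hkmix : ∀ p, kmix p = (g p)⁻¹ * k p)
    (Khatmix : (Fin 2 → ℝ) → Matrix (Fin 2) (Fin 2) ℝ)
    (hKhatmix : ∀ p, Khatmix p = (g p)⁻¹ * Khat p)
    -- the covariant divergence `(div k)_b`
    (divk : (Fin 2 → ℝ) → Fin 2 → ℝ)
    (hdivk : ∀ p b, divk p b = ∑ c, (pd c (fun q => kmix q c b) p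
      + ∑ d, Γ p c c d * kmix p d b - ∑ d, Γ p d c b * kmix p c d))
    -- the 1-form `ω_a = Σ_b k^b_a (div k)_b`
    (ω : (Fin 2 → ℝ) → Fin 2 → ℝ)
    (hω : ∀ p a, ω p a = ∑ b, kmix p b a * divk p b)
    -- hypothesis: the covariant divergence of `K̂` vanishes on `U`
    (hdivKhat : ∀ p ∈ U, ∀ b : Fin 2, ∑ c, (pd c (fun q => Khatmix q c b) p
      + ∑ d, Γ p c c d * Khatmix p d b - ∑ d, Γ p d c b * Khatmix p c d) = 0) :
    ∀ p ∈ U,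
      (∀ a : Fin 2, ω p a = -(pd a (fun q => Real.log (α q)) p)) ∧
      pd 0 (fun q => ω q 1) p = pd 1 (fun q => ω q 0) p := by
  classical
  -- determinant of g
  have hdetpos : ∀ q ∈ U, 0 < (g q).det := fun q hq => (hgpd q hq).det_pos
  have hdetne : ∀ q ∈ U, (g q).det ≠ 0 := fun q hq => (hdetpos q hq).ne'
  have hdetE : ∀ q, (g q).det = g q 0 0 * g q 1 1 - g q 0 1 * g q 1 0 :=
    fun q => det_fin_two _
  have hdetS : ContDiffOn ℝ (⊤ : ℕ∞) (fun q => (g q).det) U := by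
    refine ContDiffOn.congr ?_ (fun q _ => hdetE q)
    exact ((hgs 0 0).mul (hgs 1 1)).sub ((hgs 0 1).mul (hgs 1 0))
  -- entries of g⁻¹
  have hginvM : ∀ q, (g q)⁻¹
      = ((g q).det)⁻¹ • !![g q 1 1, -(g q 0 1); -(g q 1 0), g q 0 0] := by
    intro q
    rw [Matrix.inv_def, Matrix.adjugate_fin_two, Ring.inverse_eq_inv']
  have hg00 : ∀ q, (g q)⁻¹ 0 0 = ((g q).det)⁻¹ * g q 1 1 := by
    intro q; rw [hginvM]; simp
  have hg01 : ∀ q, (g q)⁻¹ 0 1 = ((g q).det)⁻¹ * -(g q 0 1) := by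
    intro q; rw [hginvM]; simp
  have hg10 : ∀ q, (g q)⁻¹ 1 0 = ((g q).det)⁻¹ * -(g q 1 0) := by
    intro q; rw [hginvM]; simp
  have hg11 : ∀ q, (g q)⁻¹ 1 1 = ((g q).det)⁻¹ * g q 0 0 := by
    intro q; rw [hginvM]; simp
  have hdinvS : ContDiffOn ℝ (⊤ : ℕ∞) (fun q => ((g q).det)⁻¹) U := hdetS.inv hdetne
  have hinvS : ∀ i j : Fin 2, ContDiffOn ℝ (⊤ : ℕ∞) (fun q => (g q)⁻¹ i j) U := by
    intro i j
    fin_cases i <;> fin_cases j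
    · exact ContDiffOn.congr (hdinvS.mul (hgs 1 1)) (fun q _ => hg00 q)
    · exact ContDiffOn.congr (hdinvS.mul (hgs 0 1).neg) (fun q _ => hg01 q)
    · exact ContDiffOn.congr (hdinvS.mul (hgs 1 0).neg) (fun q _ => hg10 q)
    · exact ContDiffOn.congr (hdinvS.mul (hgs 0 0)) (fun q _ => hg11 q)
  -- trace of g⁻¹K
  have htrKE : ∀ q, ((g q)⁻¹ * K q).trace
      = (g q)⁻¹ 0 0 * K q 0 0 + (g q)⁻¹ 0 1 * K q 1 0
        + ((g q)⁻¹ 1 0 * K q 0 1 + (g q)⁻¹ 1 1 * K q 1 1) := by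
    intro q
    rw [trace_fin_two]
    simp [Matrix.mul_apply, Fin.sum_univ_two]
  have htrKS : ContDiffOn ℝ (⊤ : ℕ∞) (fun q => ((g q)⁻¹ * K q).trace) U := by
    refine ContDiffOn.congr ?_ (fun q _ => htrKE q)
    exact (((hinvS 0 0).mul (hKs 0 0)).add ((hinvS 0 1).mul (hKs 1 0))).add
      (((hinvS 1 0).mul (hKs 0 1)).add ((hinvS 1 1).mul (hKs 1 1)))
  -- entries of Khat
  have hKhE : ∀ q (i j : Fin 2), Khat q i j
      = K q i j - 1/2 * ((g q)⁻¹ * K q).trace * g q i j := by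
    intro q i j
    rw [hKhat]
    simp [Matrix.sub_apply, Matrix.smul_apply]
  have hKhS : ∀ i j : Fin 2, ContDiffOn ℝ (⊤ : ℕ∞) (fun q => Khat q i j) U := by
    intro i j
    refine ContDiffOn.congr ?_ (fun q _ => hKhE q i j)
    exact (hKs i j).sub ((contDiffOn_const.mul htrKS).mul (hgs i j))
  -- entries of Khatmix
  have hKhmE : ∀ q (i j : Fin 2), Khatmix q i j
      = (g q)⁻¹ i 0 * Khat q 0 j + (g q)⁻¹ i 1 * Khat q 1 j := by
    intro q i j
    rw [hKhatmix]
    simp [Matrix.mul_apply, Fin.sum_univ_two]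
  have hKhmS : ∀ i j : Fin 2, ContDiffOn ℝ (⊤ : ℕ∞) (fun q => Khatmix q i j) U := by
    intro i j
    refine ContDiffOn.congr ?_ (fun q _ => hKhmE q i j)
    exact ((hinvS i 0).mul (hKhS 0 j)).add ((hinvS i 1).mul (hKhS 1 j))
  -- symmetries on U
  have hsymg : ∀ q ∈ U, g q 1 0 = g q 0 1 := by
    intro q hq
    have := (hgpd q hq).1.apply 0 1
    simpa using this
  have hsymK : ∀ q ∈ U, K q 1 0 = K q 0 1 := by
    intro q hq
    exact (hKsym q hq).apply 0 1
  have hsymKh : ∀ q ∈ U, Khat q 1 0 = Khat q 0 1 := by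
    intro q hq
    rw [hKhE, hKhE, hsymg q hq, hsymK q hq]
  -- trace of Khatmix vanishes on U
  have htrM : ∀ q ∈ U, Khatmix q 0 0 + Khatmix q 1 1 = 0 := by
    intro q hq
    have h1 : (g q)⁻¹ * g q = 1 :=
      nonsing_inv_mul _ (isUnit_iff_ne_zero.mpr (hdetne q hq))
    have h2 : (Khatmix q).trace = 0 := by
      rw [hKhatmix, hKhat, Matrix.mul_sub, Matrix.mul_smul, h1, trace_sub, trace_smul,
        trace_one]
      simp only [Fintype.card_fin, Nat.cast_ofNat, smul_eq_mul]
      ring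
    rw [← trace_fin_two]
    exact h2
  -- positivity of the normalization squared
  have hβpos : ∀ q ∈ U, 0 < (1/2) * (Khatmix q 0 0 * Khatmix q 0 0
      + Khatmix q 0 1 * Khatmix q 1 0
      + (Khatmix q 1 0 * Khatmix q 0 1 + Khatmix q 1 1 * Khatmix q 1 1)) := by
    intro q hq
    have hE : 0 < g q 0 0 := diag_pos (hgpd q hq) 0
    have hG : 0 < g q 1 1 := diag_pos (hgpd q hq) 1
    have hdne := hdetne q hq
    have hD : 0 < g q 0 0 * g q 1 1 - g q 0 1 * g q 0 1 := by
      have h := hdetpos q hq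
      rw [hdetE, hsymg q hq] at h
      exact h
    -- Khat is not identically zero
    have hKh0 : ¬ (Khat q 0 0 = 0 ∧ Khat q 0 1 = 0 ∧ Khat q 1 1 = 0) := by
      rintro ⟨h1, h2, h3⟩
      have hz : Khat q = 0 := by
        ext i j
        fin_cases i <;> fin_cases j <;> simp [h1, h2, h3, hsymKh q hq]
      have h12 := hKhat q
      rw [hz] at h12
      exact hind q hq _ (sub_eq_zero.mp h12.symm)
    -- entry formulas
    have hM00 : Khatmix q 0 0
        = ((g q).det)⁻¹ * (g q 1 1 * Khat q 0 0 - g q 0 1 * Khat q 0 1) := by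
      rw [hKhmE, hg00, hg01, hsymKh q hq]; ring
    have hM01 : Khatmix q 0 1
        = ((g q).det)⁻¹ * (g q 1 1 * Khat q 0 1 - g q 0 1 * Khat q 1 1) := by
      rw [hKhmE, hg00, hg01]; ring
    have hM10 : Khatmix q 1 0
        = ((g q).det)⁻¹ * (g q 0 0 * Khat q 0 1 - g q 0 1 * Khat q 0 0) := by
      rw [hKhmE, hg10, hg11, hsymKh q hq, hsymg q hq]; ring
    have hM11 : Khatmix q 1 1
        = ((g q).det)⁻¹ * (g q 0 0 * Khat q 1 1 - g q 0 1 * Khat q 0 1) := by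
      rw [hKhmE, hg10, hg11, hsymg q hq]; ring
    -- scalar trace constraint
    have htr' : g q 1 1 * Khat q 0 0 - 2 * g q 0 1 * Khat q 0 1 + g q 0 0 * Khat q 1 1 = 0 := by
      have h := htrM q hq
      rw [hM00, hM11] at h
      have h10 : (g q).det * (((g q).det)⁻¹ * (g q 1 1 * Khat q 0 0 - g q 0 1 * Khat q 0 1)
          + ((g q).det)⁻¹ * (g q 0 0 * Khat q 1 1 - g q 0 1 * Khat q 0 1)) = 0 := by
        rw [h, mul_zero]
      rw [mul_add, mul_inv_cancel_left₀ hdne, mul_inv_cancel_left₀ hdne] at h10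
      linear_combination h10
    -- key inequality
    have key : 0 < Khat q 0 1 * Khat q 0 1 - Khat q 0 0 * Khat q 1 1 := by
      by_cases hb : Khat q 0 1 = 0
      · rw [hb] at htr' ⊢
        by_cases hc : Khat q 1 1 = 0
        · exfalso
          apply hKh0
          refine ⟨?_, hb, hc⟩
          rw [hc] at htr'
          have h11 : g q 1 1 * Khat q 0 0 = 0 := by linarith
          exact (mul_eq_zero.mp h11).resolve_left hG.ne'
        · have h2 : g q 1 1 * (Khat q 0 0 * Khat q 1 1)
              = -(g q 0 0 * (Khat q 1 1 * Khat q 1 1)) := by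
            linear_combination (Khat q 1 1) * htr'
          nlinarith [mul_pos hE (mul_self_pos.mpr hc), hG]
      · have hid : 4 * g q 0 0 * g q 1 1 * (Khat q 0 1 * Khat q 0 1 - Khat q 0 0 * Khat q 1 1)
            = 4 * (g q 0 0 * g q 1 1 - g q 0 1 * g q 0 1) * (Khat q 0 1 * Khat q 0 1)
              + (g q 1 1 * Khat q 0 0 - g q 0 0 * Khat q 1 1)^2 := by
          linear_combination (-(g q 1 1 * Khat q 0 0 + g q 0 0 * Khat q 1 1
            + 2 * g q 0 1 * Khat q 0 1)) * htr'
        nlinarith [hid, mul_pos hE hG, sq_nonneg (g q 1 1 * Khat q 0 0 - g q 0 0 * Khat q 1 1),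
          mul_pos hD (mul_self_pos.mpr hb)]
    -- conclude
    have hgoal : (1/2) * (Khatmix q 0 0 * Khatmix q 0 0
        + Khatmix q 0 1 * Khatmix q 1 0
        + (Khatmix q 1 0 * Khatmix q 0 1 + Khatmix q 1 1 * Khatmix q 1 1))
        = ((g q).det)⁻¹ * ((g q).det)⁻¹ * ((g q 0 0 * g q 1 1 - g q 0 1 * g q 0 1)
            * (Khat q 0 1 * Khat q 0 1 - Khat q 0 0 * Khat q 1 1)) := by
      rw [hM00, hM01, hM10, hM11]
      linear_combination (((g q).det)⁻¹ * ((g q).det)⁻¹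
        * ((g q 1 1 * Khat q 0 0 - 2 * g q 0 1 * Khat q 0 1 + g q 0 0 * Khat q 1 1)/2)) * htr'
    rw [hgoal]
    exact mul_pos (mul_pos (inv_pos.mpr (hdetpos q hq)) (inv_pos.mpr (hdetpos q hq)))
      (mul_pos hD key)
  -- α facts
  have hαE : ∀ q, α q = Real.sqrt ((1/2) * (Khatmix q 0 0 * Khatmix q 0 0
      + Khatmix q 0 1 * Khatmix q 1 0
      + (Khatmix q 1 0 * Khatmix q 0 1 + Khatmix q 1 1 * Khatmix q 1 1))) := by
    intro q
    rw [hα, ← hKhatmix, trace_fin_two]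
    congr 1
    simp only [Matrix.mul_apply, Fin.sum_univ_two]
  have hαpos : ∀ q ∈ U, 0 < α q := by
    intro q hq
    rw [hαE]
    exact Real.sqrt_pos.mpr (hβpos q hq)
  have hα2 : ∀ q ∈ U, α q ^ 2 = (1/2) * (Khatmix q 0 0 * Khatmix q 0 0
      + Khatmix q 0 1 * Khatmix q 1 0
      + (Khatmix q 1 0 * Khatmix q 0 1 + Khatmix q 1 1 * Khatmix q 1 1)) := by
    intro q hq
    rw [hαE]
    exact Real.sq_sqrt (hβpos q hq).le
  have hαS : ContDiffOn ℝ (⊤ : ℕ∞) α U := by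
    have hbS : ContDiffOn ℝ (⊤ : ℕ∞) (fun q => (1/2) * (Khatmix q 0 0 * Khatmix q 0 0
        + Khatmix q 0 1 * Khatmix q 1 0
        + (Khatmix q 1 0 * Khatmix q 0 1 + Khatmix q 1 1 * Khatmix q 1 1))) U :=
      contDiffOn_const.mul ((((hKhmS 0 0).mul (hKhmS 0 0)).add
        ((hKhmS 0 1).mul (hKhmS 1 0))).add
        (((hKhmS 1 0).mul (hKhmS 0 1)).add ((hKhmS 1 1).mul (hKhmS 1 1))))
    refine ContDiffOn.congr ?_ (fun q _ => hαE q)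
    intro q hq
    exact ((hbS.contDiffAt (hU.mem_nhds hq)).sqrt (hβpos q hq).ne').contDiffWithinAt
  -- kmix entries
  have hkmE : ∀ q (i j : Fin 2), kmix q i j = (α q)⁻¹ * Khatmix q i j := by
    intro q i j
    rw [hkmix, hk, Matrix.mul_smul, ← hKhatmix]
    simp
  have hkmS : ∀ i j : Fin 2, ContDiffOn ℝ (⊤ : ℕ∞) (fun q => kmix q i j) U := by
    intro i j
    exact ContDiffOn.congr ((hαS.inv (fun q hq => (hαpos q hq).ne')).mul (hKhmS i j))
      (fun q _ => hkmE q i j)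
  have hKhmval : ∀ q ∈ U, ∀ i j : Fin 2, Khatmix q i j = α q * kmix q i j := by
    intro q hq i j
    rw [hkmE, ← mul_assoc, mul_inv_cancel₀ (hαpos q hq).ne', one_mul]
  -- MAIN COMPUTATION
  have main : ∀ p ∈ U, ∀ a : Fin 2, ω p a = -(pd a (fun q => Real.log (α q)) p) := by
    intro p hp a
    have hmem := hU.mem_nhds hp
    have hαd : DifferentiableAt ℝ α p := (hαS.contDiffAt hmem).differentiableAt (by simp)
    have hkd : ∀ i j : Fin 2, DifferentiableAt ℝ (fun q => kmix q i j) p :=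
      fun i j => ((hkmS i j).contDiffAt hmem).differentiableAt (by simp)
    have hαne := (hαpos p hp).ne'
    have hpdKhm : ∀ cc bb : Fin 2, pd cc (fun q => Khatmix q cc bb) p
        = pd cc α p * kmix p cc bb + α p * pd cc (fun q => kmix q cc bb) p := by
      intro cc bb
      have heq : (fun q => Khatmix q cc bb) =ᶠ[nhds p] (fun q => α q * kmix q cc bb) := by
        filter_upwards [hmem] with q hq
        exact hKhmval q hq cc bb
      rw [pd_congr heq, pd_mul hαd (hkd cc bb)]
    have rE : ∀ i j : Fin 2, Khatmix p i j = α p * kmix p i j := hKhmval p hp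
    have h2 : ∀ bb : Fin 2, α p * divk p bb
        + (pd 0 α p * kmix p 0 bb + pd 1 α p * kmix p 1 bb) = 0 := by
      intro bb
      have h := hdivKhat p hp bb
      simp only [Fin.sum_univ_two] at h
      rw [hpdKhm 0 bb, hpdKhm 1 bb] at h
      simp only [rE] at h
      rw [hdivk]
      simp only [Fin.sum_univ_two]
      linear_combination h
    have hsq : Khatmix p 0 0 * Khatmix p 0 0 + Khatmix p 0 1 * Khatmix p 1 0 = α p ^ 2 := by
      linear_combination (-1 : ℝ) * (hα2 p hp)
        + ((Khatmix p 0 0 - Khatmix p 1 1)/2) * (htrM p hp)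
    have htrk : kmix p 0 0 + kmix p 1 1 = 0 := by
      simp only [hkmE]
      linear_combination (α p)⁻¹ * (htrM p hp)
    have sdet : kmix p 0 0 * kmix p 0 0 + kmix p 0 1 * kmix p 1 0 = 1 := by
      simp only [hkmE]
      have h5 : (α p)⁻¹ * Khatmix p 0 0 * ((α p)⁻¹ * Khatmix p 0 0)
          + (α p)⁻¹ * Khatmix p 0 1 * ((α p)⁻¹ * Khatmix p 1 0)
          = ((α p)⁻¹ * α p)^2 := by
        linear_combination ((α p)⁻¹)^2 * hsq
      rw [h5, inv_mul_cancel₀ hαne, one_pow]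
    have h3 : α p * (∑ b, kmix p b a * divk p b) = -(pd a α p) := by
      fin_cases a
      · simp only [Fin.sum_univ_two, Fin.zero_eta, Fin.mk_one, Fin.isValue]
        linear_combination (kmix p 0 0) * h2 0 + (kmix p 1 0) * h2 1
          - (pd 0 α p) * sdet - (pd 1 α p * kmix p 1 0) * htrk
      · simp only [Fin.sum_univ_two, Fin.zero_eta, Fin.mk_one, Fin.isValue]
        linear_combination (kmix p 0 1) * h2 0 + (kmix p 1 1) * h2 1
          - (pd 0 α p * kmix p 0 1) * htrk - (pd 1 α p) * sdet
          - (pd 1 α p * (kmix p 1 1 - kmix p 0 0)) * htrk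
    calc ω p a = (α p)⁻¹ * (α p * (∑ b, kmix p b a * divk p b)) := by
          rw [hω, inv_mul_cancel_left₀ hαne]
      _ = (α p)⁻¹ * -(pd a α p) := by rw [h3]
      _ = -(pd a (fun q => Real.log (α q)) p) := by
          rw [pd_log hαd hαne]; ring
  -- CONCLUSION
  intro p hp
  refine ⟨main p hp, ?_⟩
  have hmem := hU.mem_nhds hp
  have hL : ContDiffAt ℝ (⊤ : ℕ∞) (fun q => Real.log (α q)) p :=
    (hαS.contDiffAt hmem).log (hαpos p hp).ne'
  have e1 : (fun q => ω q 1) =ᶠ[nhds p]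
      (fun q => -(pd 1 (fun r => Real.log (α r)) q)) := by
    filter_upwards [hmem] with q hq
    exact main q hq 1
  have e0 : (fun q => ω q 0) =ᶠ[nhds p]
      (fun q => -(pd 0 (fun r => Real.log (α r)) q)) := by
    filter_upwards [hmem] with q hq
    exact main q hq 0
  rw [pd_congr e1 0, pd_congr e0 1, pd_neg, pd_neg, pd_comm hL]
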